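/- For every point x ∈ Λ̄ of the compactified apartment, there is a countable fundamental system of open neighbourhoods: if x ∈ Λ_I with z ∈ Λ satisfying r_I(z) = x, and (V_k) is a decreasing countable basis of bounded open neighbourhoods of z in Λ, then the sets C_{U_k}^I with U_k = V_k + Σ_{i∉I} k(−η_i) form a neighbourhood basis of x in Λ̄. In particular Λ̄ is first countable. -/

import Mathlib

open Set Pointwise Topology Filter

namespace CompApp

variable {n : ℕ}

/-- The component `Λ_I`: the quotient of the functions `I → ℝ` by the line of
constants (so `Λ_I = Σ_{i∈I} ℝ η_i^I` with the relation `Σ_{i∈I} η_i^I = 0`). -/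
abbrev Comp (I : Finset (Fin n)) : Type :=
  (↥I → ℝ) ⧸ (Submodule.span ℝ {(1 : ↥I → ℝ)})

/-- quotient map onto a component -/
noncomputable def mkC (I : Finset (Fin n)) : (↥I → ℝ) →ₗ[ℝ] Comp I :=
  Submodule.mkQ _

/-- The apartment `Λ` itself, i.e. the component for `I = {1,…,n}`. -/
abbrev Apt (n : ℕ) : Type := Comp (Finset.univ : Finset (Fin n))

/-- restriction of functions from `{1,…,n}` to `J` -/
def resL (J : Finset (Fin n)) :
    ((↥(Finset.univ : Finset (Fin n)) → ℝ)) →ₗ[ℝ] (↥J → ℝ) :=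
  LinearMap.funLeft ℝ ℝ (fun j => ⟨j.1, Finset.mem_univ _⟩)

/-- The projection `r_J : Λ → Λ_J`, `Σ x_i η_i ↦ Σ_{i∈J} x_i η_i^J`. -/
noncomputable def resQ (J : Finset (Fin n)) : Apt n →ₗ[ℝ] Comp J :=
  Submodule.mapQ _ _ (resL J) (by
    rw [Submodule.span_le]
    intro x hx
    rw [Set.mem_singleton_iff] at hx
    subst hx
    exact Submodule.mem_comap.mpr (Submodule.subset_span rfl))

variable [NeZero n]

/-- The compactified apartment `Λ̄ = ⋃_{∅≠I⊆{1,…,n}} Λ_I` as a set. -/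
def CApt (n : ℕ) : Type := Σ I : {I : Finset (Fin n) // I.Nonempty}, Comp I.1

/-- The embedding `Λ ↪ Λ̄`. -/
def emb (z : Apt n) : CApt n := ⟨⟨Finset.univ, Finset.univ_nonempty⟩, z⟩

/-- The point of the boundary component `Λ_I` inside `Λ̄`. -/
def embC (I : Finset (Fin n)) (hI : I.Nonempty) (y : Comp I) : CApt n := ⟨⟨I, hI⟩, y⟩

/-- The cone `D_I = Σ_{i∉I} ℝ_{≥0}(−η_i) ⊆ Λ`. -/
noncomputable def cone (I : Finset (Fin n)) : Set (Apt n) :=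
  (mkC _) '' {x | (∀ l : ↥(Finset.univ : Finset (Fin n)), (l : Fin n) ∈ I → x l = 0) ∧
    ∀ l : ↥(Finset.univ : Finset (Fin n)), (l : Fin n) ∉ I → x l ≤ 0}

/-- The basic open set `C_U^I = ⋃_{I ⊆ J} r_J(U + D_I) ⊆ Λ̄`. -/
noncomputable def CUI (U : Set (Apt n)) (I : Finset (Fin n)) : Set (CApt n) :=
  {p | I ⊆ p.1.1 ∧ p.2 ∈ resQ p.1.1 '' (U + cone I)}

/-- Boundedness for subsets of the apartment `Λ`. -/
def BoundedA (U : Set (Apt n)) : Prop :=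
  ∃ t : Set (↥(Finset.univ : Finset (Fin n)) → ℝ),
    Bornology.IsBounded t ∧ U ⊆ (mkC _) '' t

/-- The topology of `Λ̄`: generated by the open subsets of `Λ` together with the
sets `C_U^I` for nonempty proper `I` and bounded open `U ⊆ Λ`. -/
noncomputable instance : TopologicalSpace (CApt n) :=
  TopologicalSpace.generateFrom
    ({s | ∃ U : Set (Apt n), IsOpen U ∧ s = emb '' U} ∪
     {s | ∃ (U : Set (Apt n)) (I : Finset (Fin n)), I.Nonempty ∧ I ≠ Finset.univ ∧
        IsOpen U ∧ BoundedA U ∧ s = CUI U I})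

/-- The root `a_{ij} = χ_i − χ_j` as a linear functional on `Λ`. -/
noncomputable def aFun (i j : Fin n) : Apt n →ₗ[ℝ] ℝ :=
  Submodule.liftQ _
    (LinearMap.proj (⟨i, Finset.mem_univ i⟩ : ↥(Finset.univ : Finset (Fin n))) -
      LinearMap.proj ⟨j, Finset.mem_univ j⟩) (by
    rw [Submodule.span_le]
    intro x hx
    rw [Set.mem_singleton_iff] at hx
    subst hx
    simp [LinearMap.mem_ker])

/-- The root `b_{ij}` of the component `Λ_I` (for `i, j ∈ I`). -/
noncomputable def bFun (I : Finset (Fin n)) (i j : ↥I) : Comp I →ₗ[ℝ] ℝ :=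
  Submodule.liftQ _
    (LinearMap.proj (R := ℝ) (φ := fun _ : ↥I => ℝ) i -
      LinearMap.proj (R := ℝ) (φ := fun _ : ↥I => ℝ) j) (by
    rw [Submodule.span_le]
    intro x hx
    rw [Set.mem_singleton_iff] at hx
    subst hx
    simp [LinearMap.mem_ker])

/-- The closure in `Λ̄` of the half-space `{ z ∈ Λ : a_{ij}(z) ≥ s }`. -/
noncomputable def halfCl (i j : Fin n) (s : ℝ) : Set (CApt n) :=
  closure (emb '' {z : Apt n | s ≤ aFun i j z})

/-- `f_Ω(a) = inf{ t : Ω ⊆ closure{ z ∈ Λ : a(z) ≥ −t } } ∈ ℝ ∪ {±∞}`,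
for `a = a_{ij}` (with `inf ∅ = +∞`). -/
noncomputable def fO (Ω : Set (CApt n)) (i j : Fin n) : EReal :=
  sInf {t : EReal | ∃ s : ℝ, t = (s : EReal) ∧ Ω ⊆ halfCl i j (-s)}

/-- The translation point `Σ_{i∉I} k(−η_i) ∈ Λ`. -/
noncomputable def cornerShift {n : ℕ} (I : Finset (Fin n)) (k : ℕ) : Apt n :=
  mkC _ (fun l : ↥(Finset.univ : Finset (Fin n)) =>
    if (l : Fin n) ∈ I then 0 else -(k : ℝ))

set_option linter.unusedSectionVars false

/-- The generating set of the topology of `Λ̄`. -/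
noncomputable def gens (n : ℕ) [NeZero n] : Set (Set (CApt n)) :=
  {s | ∃ U : Set (Apt n), IsOpen U ∧ s = emb '' U} ∪
  {s | ∃ (U : Set (Apt n)) (I : Finset (Fin n)), I.Nonempty ∧ I ≠ Finset.univ ∧
      IsOpen U ∧ BoundedA U ∧ s = CUI U I}

lemma top_eq : (inferInstance : TopologicalSpace (CApt n)) =
    TopologicalSpace.generateFrom (gens n) := rfl

lemma isOpen_gen {s : Set (CApt n)} (h : s ∈ gens n) : IsOpen s :=
  TopologicalSpace.isOpen_generateFrom_of_mem h

lemma basisB :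
    TopologicalSpace.IsTopologicalBasis
      ((fun f : Set (Set (CApt n)) => ⋂₀ f) '' {f | f.Finite ∧ f ⊆ gens n}) :=
  TopologicalSpace.isTopologicalBasis_of_subbasis top_eq

lemma resQ_mk (J : Finset (Fin n)) (f : ↥(Finset.univ : Finset (Fin n)) → ℝ) :
    resQ J (mkC _ f) = mkC J (fun j => f ⟨j.1, Finset.mem_univ _⟩) := rfl

lemma resQ_univ (x : Apt n) : resQ Finset.univ x = x := by
  obtain ⟨f, rfl⟩ := Submodule.mkQ_surjective _ x
  show resQ Finset.univ (mkC _ f) = mkC _ f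
  rw [resQ_mk]

lemma resQ_surj (J : Finset (Fin n)) : Function.Surjective (resQ J) := by
  intro y
  obtain ⟨g, rfl⟩ := Submodule.mkQ_surjective _ y
  refine ⟨mkC _ (fun l => if h : (l : Fin n) ∈ J then g ⟨l.1, h⟩ else 0), ?_⟩
  show resQ J (mkC _ _) = mkC J g
  rw [resQ_mk]
  congr 1
  funext j
  have hj : (j : Fin n) ∈ J := j.2
  simp only [hj, dif_pos]

lemma cone_zero (I : Finset (Fin n)) : (0 : Apt n) ∈ cone I :=
  ⟨0, ⟨fun _ _ => rfl, fun _ _ => le_refl 0⟩, map_zero _⟩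

lemma cornerShift_resQ (I : Finset (Fin n)) (k : ℕ) : resQ I (cornerShift I k) = 0 := by
  show resQ I (mkC _ _) = 0
  rw [resQ_mk]
  have : (fun j : ↥I =>
      (fun l : ↥(Finset.univ : Finset (Fin n)) =>
        if (l : Fin n) ∈ I then (0:ℝ) else -(k : ℝ)) ⟨j.1, Finset.mem_univ _⟩) = 0 := by
    funext j
    have hj : (j : Fin n) ∈ I := j.2
    simp [hj]
  rw [this, map_zero]

lemma boundedA_translate {U : Set (Apt n)} (h : BoundedA U) (c : Apt n) :
    BoundedA ((fun v => v + c) '' U) := by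
  obtain ⟨t, ht, hsub⟩ := h
  obtain ⟨c0, rfl⟩ := Submodule.mkQ_surjective _ c
  refine ⟨(fun x => x + c0) '' t, ?_, ?_⟩
  · obtain ⟨C, hC⟩ := isBounded_iff_forall_norm_le.mp ht
    refine isBounded_iff_forall_norm_le.mpr ⟨C + ‖c0‖, ?_⟩
    rintro _ ⟨x, hx, rfl⟩
    exact (norm_add_le _ _).trans (add_le_add (hC x hx) le_rfl)
  · rintro _ ⟨v, hv, rfl⟩
    obtain ⟨x, hx, rfl⟩ := hsub hv
    exact ⟨x + c0, ⟨x, hx, rfl⟩, map_add _ _ _⟩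

lemma exists_nice_basis (z : Apt n) :
    ∃ V : ℕ → Set (Apt n), (∀ k, IsOpen (V k)) ∧ (∀ k, BoundedA (V k)) ∧
      Antitone V ∧ (𝓝 z).HasBasis (fun _ : ℕ => True) V := by
  obtain ⟨z0, rfl⟩ := Submodule.mkQ_surjective _ z
  refine ⟨fun k => mkC _ '' Metric.ball z0 (1 / (k + 1)), ?_, ?_, ?_, ?_⟩
  · exact fun k => Submodule.isOpenMap_mkQ _ _ Metric.isOpen_ball
  · exact fun k => ⟨Metric.ball z0 (1 / (k + 1)), Metric.isBounded_ball, subset_rfl⟩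
  · intro a b hab
    refine Set.image_mono (Metric.ball_subset_ball ?_)
    have : (a : ℝ) + 1 ≤ (b : ℝ) + 1 := by exact_mod_cast Nat.succ_le_succ hab
    exact one_div_le_one_div_of_le (by positivity) this
  · have hmap := (Submodule.isOpenQuotientMap_mkQ
      (Submodule.span ℝ {(1 : ↥(Finset.univ : Finset (Fin n)) → ℝ)})).map_nhds_eq z0
    rw [show (𝓝 ((Submodule.span ℝ
        {(1 : ↥(Finset.univ : Finset (Fin n)) → ℝ)}).mkQ z0)) = _ from hmap.symm]
    exact Metric.nhds_basis_ball_inv_nat_succ.map _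

lemma finite_uniform {α : Type*} {P : ℕ → α → Prop} {F : Set α} (hF : F.Finite)
    (h : ∀ g ∈ F, ∃ K, ∀ k ≥ K, P k g) : ∃ K, ∀ k ≥ K, ∀ g ∈ F, P k g := by
  revert h
  refine Set.Finite.induction_on (motive := fun F _ =>
    (∀ g ∈ F, ∃ K, ∀ k ≥ K, P k g) → ∃ K, ∀ k ≥ K, ∀ g ∈ F, P k g) F hF
    (fun _ => ⟨0, by simp⟩) ?_
  intro a s ha hs ih h
  obtain ⟨K1, hK1⟩ := h a (Set.mem_insert _ _)
  obtain ⟨K2, hK2⟩ := ih fun g hg => h g (Set.mem_insert_of_mem _ hg)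
  refine ⟨max K1 K2, fun k hk g hg => ?_⟩
  rcases hg with rfl | hgs
  · exact hK1 k (le_trans (le_max_left _ _) hk)
  · exact hK2 k (le_trans (le_max_right _ _) hk) g hgs

/-- Key containment lemma. -/
lemma key (I I' : Finset (Fin n)) (hI'I : I' ⊆ I) {U' : Set (Apt n)} (hU'o : IsOpen U')
    {z : Apt n} (hz : resQ I z ∈ resQ I '' (U' + cone I'))
    {V : ℕ → Set (Apt n)} (hVanti : Antitone V)
    (hVbasis : (𝓝 z).HasBasis (fun _ : ℕ => True) V) :
    ∃ K, ∀ k ≥ K, CUI ((fun v => v + cornerShift I k) '' V k) I ⊆ CUI U' I' := by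
  obtain ⟨w, hw, hwz⟩ := hz
  rw [Set.mem_add] at hw
  obtain ⟨u', hu', c', hc', rfl⟩ := hw
  obtain ⟨ct', ⟨hc'0, hc'neg⟩, rfl⟩ := hc'
  obtain ⟨zt, rfl⟩ := Submodule.mkQ_surjective _ z
  obtain ⟨ut, rfl⟩ := Submodule.mkQ_surjective _ u'
  -- extract the constant α
  have hwz' : resQ I (mkC _ (ut + ct')) = resQ I (mkC _ zt) := by
    rw [map_add]
    exact hwz
  rw [resQ_mk, resQ_mk] at hwz'
  have hmem := (Submodule.Quotient.eq
    (Submodule.span ℝ {(1 : ↥I → ℝ)})).mp hwz'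
  rw [Submodule.mem_span_singleton] at hmem
  obtain ⟨α, hα⟩ := hmem
  have hαl : ∀ l : ↥(Finset.univ : Finset (Fin n)), (l : Fin n) ∈ I →
      ut l + ct' l - zt l = α := by
    intro l hl
    have h1 := congrFun hα ⟨(l : Fin n), hl⟩
    have h2 : (⟨((⟨(l : Fin n), hl⟩ : ↥I) : Fin n), Finset.mem_univ _⟩ :
        ↥(Finset.univ : Finset (Fin n))) = l := Subtype.ext rfl
    simp only [Pi.smul_apply, Pi.one_apply, smul_eq_mul, mul_one, Pi.sub_apply,
      Pi.add_apply, h2] at h1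
    linarith
  -- the bound K₂
  obtain ⟨m, hm⟩ := Finite.exists_le
    (fun l : ↥(Finset.univ : Finset (Fin n)) => zt l - ut l + α)
  obtain ⟨K₂, hK₂⟩ := exists_nat_ge m
  -- the neighbourhood condition K₁
  have hTopen : IsOpen ((fun v : Apt n => mkC _ ut + (v - mkC _ zt)) ⁻¹' U') :=
    hU'o.preimage (continuous_const.add (continuous_id.sub continuous_const))
  have hzT : (mkC (Finset.univ : Finset (Fin n)) zt) ∈
      ((fun v : Apt n => mkC _ ut + (v - mkC _ zt)) ⁻¹' U') := by
    show mkC _ ut + (mkC _ zt - mkC _ zt) ∈ U'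
    rw [sub_self, add_zero]
    exact hu'
  obtain ⟨K₁, -, hK₁⟩ := hVbasis.mem_iff.mp (hTopen.mem_nhds hzT)
  refine ⟨max K₁ K₂, fun k hk => ?_⟩
  rintro ⟨Jp, yJ⟩ ⟨hIJ, hyJ⟩
  replace hIJ : I ⊆ Jp.1 := hIJ
  replace hyJ : yJ ∈ resQ Jp.1 '' ((fun v => v + cornerShift I k) '' V k + cone I) := hyJ
  obtain ⟨q, hq, rfl⟩ := hyJ
  rw [Set.mem_add] at hq
  obtain ⟨a, ha, c, hc, rfl⟩ := hq
  obtain ⟨v, hv, rfl⟩ := ha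
  obtain ⟨ct, ⟨hc0, hcneg⟩, rfl⟩ := hc
  obtain ⟨vt, rfl⟩ := Submodule.mkQ_surjective _ v
  have hIJ' : I ⊆ Jp.1 := hIJ
  have hvT : mkC _ ut + (mkC _ vt - mkC _ zt) ∈ U' :=
    hK₁ (hVanti (le_trans (le_max_left _ _) hk) hv)
  have hkK₂ : (K₂ : ℝ) ≤ (k : ℝ) :=
    Nat.cast_le.mpr (le_trans (le_max_right _ _) hk)
  set g : ↥(Finset.univ : Finset (Fin n)) → ℝ := fun l =>
    if (l : Fin n) ∈ Jp.1 then
      zt l - ut l + (if (l : Fin n) ∈ I then 0 else -(k : ℝ)) + ct l + α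
    else 0 with hgdef
  have hg : mkC _ g ∈ cone I' := by
    refine ⟨g, ⟨?_, ?_⟩, rfl⟩
    · intro l hl
      have hlI : (l : Fin n) ∈ I := hI'I hl
      have hlJ : (l : Fin n) ∈ Jp.1 := hIJ' hlI
      simp only [hgdef, if_pos hlJ, if_pos hlI, hc0 l hlI]
      linarith [hαl l hlI, hc'0 l hl]
    · intro l hl
      by_cases hlJ : (l : Fin n) ∈ Jp.1
      · by_cases hlI : (l : Fin n) ∈ I
        · simp only [hgdef, if_pos hlJ, if_pos hlI, hc0 l hlI]
          linarith [hαl l hlI, hc'neg l hl]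
        · simp only [hgdef, if_pos hlJ, if_neg hlI]
          linarith [hm l, hK₂, hcneg l hlI, hkK₂]
      · simp only [hgdef, if_neg hlJ, le_refl]
  have heq : resQ Jp.1 ((mkC _ ut + (mkC _ vt - mkC _ zt)) + mkC _ g) =
      resQ Jp.1 ((mkC _ vt + cornerShift I k) + mkC _ ct) := by
    have e1 : (mkC (Finset.univ : Finset (Fin n)) ut +
        (mkC _ vt - mkC _ zt)) + mkC _ g = mkC _ (ut + (vt - zt) + g) := by
      simp only [map_add, map_sub]
    have e2 : (mkC (Finset.univ : Finset (Fin n)) vt + cornerShift I k) + mkC _ ct =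
        mkC _ (vt + (fun l : ↥(Finset.univ : Finset (Fin n)) =>
          if (l : Fin n) ∈ I then 0 else -(k : ℝ)) + ct) := by
      rw [map_add, map_add]
      rfl
    rw [e1, e2, resQ_mk, resQ_mk]
    refine (Submodule.Quotient.eq _).mpr ?_
    rw [Submodule.mem_span_singleton]
    refine ⟨α, ?_⟩
    funext j
    have hjJ : (j : Fin n) ∈ Jp.1 := j.2
    simp only [Pi.smul_apply, Pi.one_apply, smul_eq_mul, mul_one, Pi.sub_apply,
      Pi.add_apply, hgdef, hjJ, if_pos]
    ring
  exact ⟨hI'I.trans hIJ', _, Set.add_mem_add hvT hg, heq⟩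

lemma mem_gens_CUI {V : ℕ → Set (Apt n)} (hVopen : ∀ k, IsOpen (V k))
    (hVbdd : ∀ k, BoundedA (V k)) (I : Finset (Fin n)) (hI : I.Nonempty)
    (hIu : I ≠ Finset.univ) (k : ℕ) :
    CUI ((fun v => v + cornerShift I k) '' V k) I ∈ gens n :=
  Or.inr ⟨_, I, hI, hIu, (isOpenMap_add_right _) _ (hVopen k),
    boundedA_translate (hVbdd k) _, rfl⟩

/-- The boundary-point neighbourhood basis. -/
lemma boundary_basis {n : ℕ} [NeZero n]
    (I : Finset (Fin n)) (hI : I.Nonempty) (hIu : I ≠ Finset.univ)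
    (y : Comp I) (z : Apt n) (hz : resQ I z = y)
    (V : ℕ → Set (Apt n))
    (hVopen : ∀ k, IsOpen (V k)) (hVbdd : ∀ k, BoundedA (V k))
    (hVanti : Antitone V)
    (hVbasis : (nhds z).HasBasis (fun _ : ℕ => True) V) :
    (nhds (embC I hI y)).HasBasis (fun _ : ℕ => True)
      (fun k => CUI ((fun v => v + cornerShift I k) '' V k) I) := by
  rw [Filter.hasBasis_iff]
  intro t
  constructor
  · intro ht
    obtain ⟨b, ⟨F, ⟨hFfin, hFsub⟩, rfl⟩, hxb, hbt⟩ := basisB.mem_nhds_iff.mp ht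
    have hsingle : ∀ g ∈ F, ∃ K, ∀ k ≥ K,
        CUI ((fun v => v + cornerShift I k) '' V k) I ⊆ g := by
      intro g hg
      rcases hFsub hg with ⟨U, hUo, rfl⟩ | ⟨U', I', hI', hI'u, hU'o, hU'b, rfl⟩
      · exfalso
        obtain ⟨u, -, he⟩ := (Set.mem_sInter.mp hxb _ hg)
        have := congrArg (fun p : CApt n => p.1.1) he
        exact hIu this.symm
      · have hx : embC I hI y ∈ CUI U' I' := Set.mem_sInter.mp hxb _ hg
        obtain ⟨hI'I, hyI⟩ := hx
        rw [← hz] at hyI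
        exact key I I' hI'I hU'o hyI hVanti hVbasis
    obtain ⟨K, hK⟩ := finite_uniform hFfin hsingle
    exact ⟨K, trivial, fun p hp => hbt (Set.mem_sInter.mpr fun g hg =>
      hK K le_rfl g hg hp)⟩
  · rintro ⟨k, -, hsub⟩
    refine Filter.mem_of_superset ?_ hsub
    refine (isOpen_gen (mem_gens_CUI hVopen hVbdd I hI hIu k)).mem_nhds ?_
    have hzV : z ∈ V k := mem_of_mem_nhds (hVbasis.mem_of_mem trivial)
    refine ⟨subset_rfl, (z + cornerShift I k) + 0, Set.add_mem_add ⟨z, hzV, rfl⟩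
      (cone_zero I), ?_⟩
    show resQ I ((z + cornerShift I k) + 0) = y
    rw [map_add, map_add, cornerShift_resQ, map_zero, add_zero, add_zero, hz]

/-- The interior-point neighbourhood basis. -/
lemma interior_basis {n : ℕ} [NeZero n] (z : Apt n)
    (V : ℕ → Set (Apt n)) (hVopen : ∀ k, IsOpen (V k)) (hVanti : Antitone V)
    (hVbasis : (nhds z).HasBasis (fun _ : ℕ => True) V) :
    (nhds (emb z)).HasBasis (fun _ : ℕ => True) (fun k => emb '' V k) := by
  rw [Filter.hasBasis_iff]
  intro t
  constructor
  · intro ht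
    obtain ⟨b, ⟨F, ⟨hFfin, hFsub⟩, rfl⟩, hxb, hbt⟩ := basisB.mem_nhds_iff.mp ht
    have hsingle : ∀ g ∈ F, ∃ K, ∀ k ≥ K, emb '' V k ⊆ g := by
      intro g hg
      rcases hFsub hg with ⟨U, hUo, rfl⟩ | ⟨U', I', hI', hI'u, hU'o, hU'b, rfl⟩
      · obtain ⟨u, hu, he⟩ := (Set.mem_sInter.mp hxb _ hg)
        have hu' : u = z := by
          replace he := Sigma.mk.inj_iff.mp he
          exact eq_of_heq he.2
        subst hu'
        obtain ⟨K, -, hK⟩ := hVbasis.mem_iff.mp (hUo.mem_nhds hu)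
        exact ⟨K, fun k hk => Set.image_mono ((hVanti hk).trans hK)⟩
      · have hx : emb z ∈ CUI U' I' := Set.mem_sInter.mp hxb _ hg
        obtain ⟨-, q, hq, hqz⟩ := hx
        replace hqz : resQ Finset.univ q = z := hqz
        rw [resQ_univ] at hqz
        subst hqz
        have hopen : IsOpen (U' + cone I') := hU'o.add_right
        obtain ⟨K, -, hK⟩ := hVbasis.mem_iff.mp (hopen.mem_nhds hq)
        refine ⟨K, fun k hk => ?_⟩
        rintro _ ⟨v, hv, rfl⟩
        exact ⟨Finset.subset_univ _, v, hK (hVanti hk hv), resQ_univ v⟩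
    obtain ⟨K, hK⟩ := finite_uniform hFfin hsingle
    exact ⟨K, trivial, fun p hp => hbt (Set.mem_sInter.mpr fun g hg =>
      hK K le_rfl g hg hp)⟩
  · rintro ⟨k, -, hsub⟩
    refine Filter.mem_of_superset ?_ hsub
    refine (isOpen_gen (Or.inl ⟨V k, hVopen k, rfl⟩)).mem_nhds ?_
    exact ⟨z, mem_of_mem_nhds (hVbasis.mem_of_mem trivial), rfl⟩


/-- Every point `x ∈ Λ̄` has a countable fundamental system of open
neighbourhoods: if `x ∈ Λ_I` with `z ∈ Λ` satisfying `r_I(z) = x`, and `(V_k)`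
is a decreasing countable basis of bounded open neighbourhoods of `z` in `Λ`,
then the sets `C_{U_k}^I` with `U_k = V_k + Σ_{i∉I} k(−η_i)` form a
neighbourhood basis of `x` in `Λ̄`.  In particular `Λ̄` is first countable. -/
theorem nhds_basis_CUI {n : ℕ} [NeZero n]
    (I : Finset (Fin n)) (hI : I.Nonempty) (hIu : I ≠ Finset.univ)
    (y : Comp I) (z : Apt n) (hz : resQ I z = y)
    (V : ℕ → Set (Apt n))
    (hVopen : ∀ k, IsOpen (V k)) (hVbdd : ∀ k, BoundedA (V k))
    (hVanti : Antitone V)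
    (hVbasis : (nhds z).HasBasis (fun _ : ℕ => True) V) :
    (nhds (embC I hI y)).HasBasis (fun _ : ℕ => True)
        (fun k => CUI ((fun v => v + cornerShift I k) '' V k) I) ∧
      FirstCountableTopology (CApt n) := by
  refine ⟨boundary_basis I hI hIu y z hz V hVopen hVbdd hVanti hVbasis, ?_⟩
  constructor
  intro a
  obtain ⟨⟨J, hJ⟩, yJ⟩ := a
  by_cases hJu : J = Finset.univ
  · subst hJu
    obtain ⟨W, hWo, hWb, hWa, hWbasis⟩ := exists_nice_basis yJ
    exact (interior_basis yJ W hWo hWa hWbasis).isCountablyGenerated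
  · obtain ⟨w, hw⟩ := resQ_surj J yJ
    obtain ⟨W, hWo, hWb, hWa, hWbasis⟩ := exists_nice_basis w
    exact (boundary_basis J hJ hJu yJ w hw W hWo hWb hWa hWbasis).isCountablyGenerated

end CompApp
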